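/- arXiv:2603.01309 — 2 statements merged into one kernel-verified Lean document; each statement's English description precedes it below -/
import Mathlib

section
/- Let K be a natural number, H > 0 a real number, and g : Fin K → ℝ a sequence with 0 ≤ g t ≤ H for every t. Let N : ℝ → ℝ be a nonnegative function that is antitone on (0, H], and suppose that for every ε ∈ (0, H] the number of ε-suboptimal episodes is controlled: card{t : Fin K | g t > ε} ≤ N ε. Then the cumulative regret satisfies ∑_{t} g t ≤ ∫_{0}^{H} min(K, N ε) dε, where the integral is over (0, H]. (This is the deterministic core of the theorem that uniform-PAC with budget N(ε, δ) implies high-probability regret O(∫₀^H min{K, N(ε, δ)} dε).) -/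
open MeasureTheory

/-- Deterministic core of the uniform-PAC ⇒ regret conversion: if for every
`ε ∈ (0, H]` the number of `ε`-suboptimal episodes is at most `N ε` (with `N`
nonnegative and antitone on `(0, H]`), then the cumulative regret is bounded
by `∫₀^H min (K, N ε) dε`. -/
theorem uniformPAC_implies_regret (K : ℕ) (H : ℝ) (hH : 0 < H) (g : Fin K → ℝ)
    (hg : ∀ t, 0 ≤ g t ∧ g t ≤ H) (N : ℝ → ℝ) (hN0 : ∀ ε, 0 ≤ N ε)
    (hNanti : AntitoneOn N (Set.Ioc (0 : ℝ) H))
    (hcount : ∀ ε ∈ Set.Ioc (0 : ℝ) H,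
      ({t : Fin K | g t > ε}.ncard : ℝ) ≤ N ε) :
    ∑ t, g t ≤ ∫ ε in Set.Ioc (0 : ℝ) H, min (K : ℝ) (N ε) := by
  set M : ℝ → ℝ := fun ε => min (K : ℝ) (N ε) with hM
  -- M is antitone on (0, H]
  have hManti : AntitoneOn M (Set.Ioc (0 : ℝ) H) := fun x hx y hy hxy =>
    min_le_min le_rfl (hNanti hx hy hxy)
  -- M is integrable on (0, H]
  have hMint : IntegrableOn M (Set.Ioc (0 : ℝ) H) := by
    have hconst : IntegrableOn (fun _ : ℝ => (K : ℝ)) (Set.Ioc (0 : ℝ) H) := by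
      simp [integrableOn_const, measure_Ioc_lt_top]
    refine Integrable.mono' hconst
      ((aemeasurable_restrict_of_antitoneOn measurableSet_Ioc hManti).aestronglyMeasurable) ?_
    refine ae_of_all _ fun ε => ?_
    rw [Real.norm_eq_abs, abs_le]
    constructor
    · have := hN0 ε
      have : (0:ℝ) ≤ M ε := le_min (by positivity) (hN0 ε)
      linarith [Nat.cast_nonneg (α := ℝ) K]
    · exact min_le_left _ _
  -- the counting function
  set F : ℝ → ℝ := fun ε => ∑ t, (Set.Iio (g t)).indicator (fun _ => (1:ℝ)) ε with hF
  -- each indicator is integrable on (0, H]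
  have hind : ∀ t : Fin K,
      IntegrableOn ((Set.Iio (g t)).indicator (fun _ => (1:ℝ))) (Set.Ioc (0 : ℝ) H) := by
    intro t
    refine Integrable.indicator ?_ measurableSet_Iio
    simp [integrableOn_const, measure_Ioc_lt_top]
  have hFint : IntegrableOn F (Set.Ioc (0 : ℝ) H) :=
    integrable_finset_sum _ fun t _ => hind t
  -- ∫ of each indicator equals g t
  have hindint : ∀ t : Fin K,
      ∫ ε in Set.Ioc (0 : ℝ) H, (Set.Iio (g t)).indicator (fun _ => (1:ℝ)) ε = g t := by
    intro t
    rw [MeasureTheory.setIntegral_indicator measurableSet_Iio]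
    have hset : Set.Ioc (0 : ℝ) H ∩ Set.Iio (g t) = Set.Ioo 0 (g t) := by
      ext x
      simp only [Set.mem_inter_iff, Set.mem_Ioc, Set.mem_Iio, Set.mem_Ioo]
      constructor
      · rintro ⟨⟨h1, _⟩, h3⟩; exact ⟨h1, h3⟩
      · rintro ⟨h1, h2⟩; exact ⟨⟨h1, le_trans (le_of_lt h2) (hg t).2⟩, h2⟩
    rw [hset]
    simp [Real.volume_Ioo, ENNReal.toReal_ofReal (hg t).1, (hg t).1]
  -- ∫ F = ∑ g t
  have hFeq : ∫ ε in Set.Ioc (0 : ℝ) H, F ε = ∑ t, g t := by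
    rw [hF]
    rw [MeasureTheory.integral_finset_sum _ fun t _ => hind t]
    exact Finset.sum_congr rfl fun t _ => hindint t
  -- F ε equals the cardinality
  have hFcard : ∀ ε : ℝ, F ε = (({t : Fin K | g t > ε}.ncard : ℝ)) := by
    intro ε
    have : {t : Fin K | g t > ε} = ↑(Finset.univ.filter fun t => ε < g t) := by
      ext t; simp [gt_iff_lt]
    rw [this, Set.ncard_coe_finset]
    simp only [hF, Set.indicator_apply, Set.mem_Iio]
    rw [Finset.sum_boole]
  -- pointwise bound on (0, H]
  have hle : ∀ ε ∈ Set.Ioc (0 : ℝ) H, F ε ≤ M ε := by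
    intro ε hε
    rw [hFcard ε]
    refine le_min ?_ (hcount ε hε)
    have hsub : {t : Fin K | g t > ε}.ncard ≤ K := by
      have h1 := Set.ncard_le_ncard (Set.subset_univ {t : Fin K | g t > ε}) Set.finite_univ
      simpa [Set.ncard_univ] using h1
    exact_mod_cast hsub
  calc ∑ t, g t = ∫ ε in Set.Ioc (0 : ℝ) H, F ε := hFeq.symm
    _ ≤ ∫ ε in Set.Ioc (0 : ℝ) H, M ε :=
        setIntegral_mono_on hFint hMint measurableSet_Ioc hle
end

section
/- In every episodic finite-horizon MDP with finite state type S, finite nonempty action type A, horizon H, transition kernels P, and rewards r, there exists a deterministic (possibly nonstationary) policy d : Fin H → S → A that is simultaneously optimal at every stage and state: for every (Markov, randomized) policy π, every stage h ≤ H, and every state s, V^d_h(s) ≥ V^π_h(s). In particular the optimal value V*_h(s) := ⨆_π V^π_h(s) is attained by a deterministic policy. -/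
open scoped BigOperators

noncomputable section

/-- Expectation of a real-valued function under a probability mass function. -/
noncomputable def pexp {α : Type} (p : PMF α) (f : α → ℝ) : ℝ :=
  ∑' a, (p a).toReal * f a

variable {S A : Type} [Fintype S] [Nonempty S] [Fintype A] [Nonempty A] {H : ℕ}

/-- Trajectory distribution of an episodic MDP: `traj P π n h s` is the
distribution over the list of (state, action) pairs produced over the next
`n` stages, starting at stage `h` in state `s`, when at each stage `t` the
action is sampled from `π t s_t` and the next state from `P t s_t a_t`. -/
noncomputable def traj (P : Fin H → S → A → PMF S) (π : Fin H → S → PMF A) :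
    ℕ → ℕ → S → PMF (List (S × A))
  | 0, _, _ => PMF.pure []
  | n + 1, h, s =>
    if hlt : h < H then
      (π ⟨h, hlt⟩ s).bind fun a =>
        (P ⟨h, hlt⟩ s a).bind fun s' =>
          (traj P π n (h + 1) s').map fun l => (s, a) :: l
    else PMF.pure []

/-- Cumulative reward `∑_{t=h}^{H-1} r t s_t a_t` of a trajectory whose first
entry corresponds to stage `h`. -/
noncomputable def cumReward (r : Fin H → S → A → ℝ) (h : ℕ)
    (l : List (S × A)) : ℝ :=
  (((List.range l.length).zip l).map fun p =>
    if hlt : h + p.1 < H then r ⟨h + p.1, hlt⟩ p.2.1 p.2.2 else 0).sum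

/-- Value `V^π_h(s)`: the trajectory expectation of the cumulative reward
from stage `h` onward, started at `s_h = s`. -/
noncomputable def value (P : Fin H → S → A → PMF S) (r : Fin H → S → A → ℝ)
    (π : Fin H → S → PMF A) (h : ℕ) (s : S) : ℝ :=
  pexp (traj P π (H - h) h s) (cumReward r h)

end

/-- The deterministic policy `d : Fin H → S → A`, viewed as the randomized
policy assigning the point mass at `d h s`. -/
noncomputable def detPolicy {S A : Type} {H : ℕ} (d : Fin H → S → A) :
    Fin H → S → PMF A := fun h s => PMF.pure (d h s)

/-! ### Auxiliary lemmas about `pexp` -/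

section PexpLemmas

open Classical

variable {α β : Type}

lemma pexp_eq_sum (p : PMF α) (f : α → ℝ) (s : Finset α) (hs : p.support ⊆ ↑s) :
    pexp p f = ∑ x ∈ s, (p x).toReal * f x := by
  refine tsum_eq_sum ?_
  intro b hb
  have hb' : b ∉ p.support := fun h => hb (hs h)
  rw [(p.apply_eq_zero_iff b).2 hb']
  simp

lemma sum_toReal_eq_one (p : PMF α) (s : Finset α) (hs : p.support ⊆ ↑s) :
    ∑ x ∈ s, (p x).toReal = 1 := by
  have h1 : ∑ x ∈ s, p x = 1 := by
    rw [← tsum_eq_sum (L := SummationFilter.unconditional α) (f := fun x => p x) (s := s)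
      (fun b hb => (p.apply_eq_zero_iff b).2 fun h => hb (hs h))]
    exact p.tsum_coe
  rw [← ENNReal.toReal_sum (fun a _ => p.apply_ne_top a), h1, ENNReal.toReal_one]

lemma pexp_pure (a : α) (f : α → ℝ) : pexp (PMF.pure a) f = f a := by
  rw [pexp_eq_sum (PMF.pure a) f {a} (by simp [PMF.support_pure])]
  simp [PMF.pure_apply]

lemma pexp_bind (p : PMF α) (q : α → PMF β) (g : β → ℝ)
    (hp : p.support.Finite) (hq : ∀ a, (q a).support.Finite) :
    pexp (p.bind q) g = pexp p fun a => pexp (q a) g := by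
  classical
  set s := hp.toFinset with hsdef
  set t := s.biUnion fun a => (hq a).toFinset with htdef
  have hqt : ∀ a ∈ s, (q a).support ⊆ ↑t := by
    intro a ha b hb
    simp only [htdef, Finset.coe_biUnion, Set.mem_iUnion]
    exact ⟨a, ha, (hq a).mem_toFinset.2 hb⟩
  have hbt : (p.bind q).support ⊆ ↑t := by
    rw [PMF.support_bind]
    intro b hb
    simp only [Set.mem_iUnion] at hb
    obtain ⟨a, ha, hab⟩ := hb
    exact hqt a (hp.mem_toFinset.2 ha) hab
  rw [pexp_eq_sum _ _ t hbt, pexp_eq_sum p _ s (by simp [hsdef])]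
  have key : ∀ b, ((p.bind q) b).toReal = ∑ a ∈ s, (p a).toReal * ((q a) b).toReal := by
    intro b
    rw [PMF.bind_apply]
    rw [tsum_eq_sum (s := s) (fun a ha => by
      rw [(p.apply_eq_zero_iff a).2 (fun h => ha (hp.mem_toFinset.2 h)), zero_mul])]
    rw [ENNReal.toReal_sum (fun a _ => ENNReal.mul_ne_top (p.apply_ne_top a) ((q a).apply_ne_top b))]
    exact Finset.sum_congr rfl fun a _ => ENNReal.toReal_mul
  calc ∑ b ∈ t, ((p.bind q) b).toReal * g b
      = ∑ b ∈ t, ∑ a ∈ s, (p a).toReal * ((q a) b).toReal * g b := by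
        refine Finset.sum_congr rfl fun b _ => ?_
        rw [key b, Finset.sum_mul]
    _ = ∑ a ∈ s, ∑ b ∈ t, (p a).toReal * ((q a) b).toReal * g b := Finset.sum_comm
    _ = ∑ a ∈ s, (p a).toReal * pexp (q a) g := by
        refine Finset.sum_congr rfl fun a ha => ?_
        rw [pexp_eq_sum (q a) g t (hqt a ha), Finset.mul_sum]
        exact Finset.sum_congr rfl fun b _ => by ring

lemma pexp_map (p : PMF α) (g : α → β) (f : β → ℝ) (hp : p.support.Finite) :
    pexp (p.map g) f = pexp p (f ∘ g) := by
  rw [PMF.map, pexp_bind p _ f hp (fun a => by simp [Function.comp, PMF.support_pure])]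
  simp only [Function.comp]
  exact tsum_congr fun a => by simp only [pexp_pure, Function.comp]

lemma pexp_congr (p : PMF α) {f g : α → ℝ} (h : ∀ a, f a = g a) :
    pexp p f = pexp p g := by
  exact tsum_congr fun a => by rw [h a]

lemma pexp_const (p : PMF α) (c : ℝ) (hp : p.support.Finite) :
    pexp p (fun _ => c) = c := by
  rw [pexp_eq_sum p _ hp.toFinset (by simp), ← Finset.sum_mul,
    sum_toReal_eq_one p hp.toFinset (by simp), one_mul]

lemma pexp_add (p : PMF α) (f g : α → ℝ) (hp : p.support.Finite) :
    pexp p (fun a => f a + g a) = pexp p f + pexp p g := by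
  rw [pexp_eq_sum p _ hp.toFinset (by simp), pexp_eq_sum p f hp.toFinset (by simp),
    pexp_eq_sum p g hp.toFinset (by simp), ← Finset.sum_add_distrib]
  exact Finset.sum_congr rfl fun a _ => by ring

lemma pexp_const_add (p : PMF α) (c : ℝ) (g : α → ℝ) (hp : p.support.Finite) :
    pexp p (fun a => c + g a) = c + pexp p g := by
  rw [pexp_add p _ g hp, pexp_const p c hp]

lemma pexp_mono (p : PMF α) {f g : α → ℝ} (hp : p.support.Finite)
    (h : ∀ a, f a ≤ g a) : pexp p f ≤ pexp p g := by
  rw [pexp_eq_sum p f hp.toFinset (by simp), pexp_eq_sum p g hp.toFinset (by simp)]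
  exact Finset.sum_le_sum fun a _ =>
    mul_le_mul_of_nonneg_left (h a) ENNReal.toReal_nonneg

lemma pexp_le_const (p : PMF α) {f : α → ℝ} {c : ℝ} (hp : p.support.Finite)
    (h : ∀ a, f a ≤ c) : pexp p f ≤ c := by
  calc pexp p f ≤ pexp p (fun _ => c) := pexp_mono p hp h
    _ = c := pexp_const p c hp

end PexpLemmas

/-! ### MDP lemmas -/

set_option linter.unusedSectionVars false

section MDP

variable {S A : Type} [Fintype S] [Nonempty S] [Fintype A] [Nonempty A] {H : ℕ}
variable (P : Fin H → S → A → PMF S) (r : Fin H → S → A → ℝ)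

lemma traj_support_finite (π : Fin H → S → PMF A) :
    ∀ n h s, (traj P π n h s).support.Finite := by
  intro n
  induction n with
  | zero => intro h s; simp [traj, PMF.support_pure]
  | succ n ih =>
    intro h s
    by_cases hlt : h < H
    · simp only [traj, dif_pos hlt, PMF.support_bind, PMF.support_map]
      refine Set.Finite.biUnion (Set.toFinite _) fun a _ => ?_
      refine Set.Finite.biUnion (Set.toFinite _) fun s' _ => ?_
      exact (ih (h + 1) s').image _
    · simp [traj, dif_neg hlt, PMF.support_pure]

lemma cumReward_nil (h : ℕ) : cumReward r h ([] : List (S × A)) = 0 := by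
  simp [cumReward]

lemma cumReward_cons (h : ℕ) (hlt : h < H) (s : S) (a : A) (l : List (S × A)) :
    cumReward r h ((s, a) :: l) = r ⟨h, hlt⟩ s a + cumReward r (h + 1) l := by
  unfold cumReward
  rw [List.length_cons, List.range_succ_eq_map, List.zip_cons_cons, List.map_cons, List.sum_cons,
    List.zip_map_left, List.map_map]
  congr 1
  · simp [hlt]
  · refine congrArg List.sum (List.map_congr_left fun p _ => ?_)
    obtain ⟨i, x⟩ := p
    simp only [Function.comp_apply, Prod.map_apply, id_eq]
    have hn : h + (i + 1) = h + 1 + i := by omega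
    by_cases hlt2 : h + 1 + i < H
    · rw [dif_pos (hn ▸ hlt2), dif_pos hlt2]
      congr 1
      exact Fin.ext hn
    · rw [dif_neg (by omega), dif_neg hlt2]

lemma value_of_ge (π : Fin H → S → PMF A) (h : ℕ) (hh : H ≤ h) (s : S) :
    value P r π h s = 0 := by
  unfold value
  rw [Nat.sub_eq_zero_of_le hh]
  show pexp (traj P π 0 h s) _ = 0
  rw [show traj P π 0 h s = PMF.pure [] from rfl, pexp_pure, cumReward_nil]

lemma value_succ (π : Fin H → S → PMF A) (h : ℕ) (hlt : h < H) (s : S) :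
    value P r π h s =
      pexp (π ⟨h, hlt⟩ s) fun a => r ⟨h, hlt⟩ s a +
        pexp (P ⟨h, hlt⟩ s a) fun s' => value P r π (h + 1) s' := by
  unfold value
  rw [show H - h = (H - (h + 1)) + 1 from by omega]
  show pexp (traj P π (H - (h + 1) + 1) h s) _ = _
  rw [show traj P π (H - (h + 1) + 1) h s =
    (π ⟨h, hlt⟩ s).bind fun a =>
      (P ⟨h, hlt⟩ s a).bind fun s' =>
        (traj P π (H - (h + 1)) (h + 1) s').map fun l => (s, a) :: l
    from by simp [traj, dif_pos hlt]]
  have hmapfin : ∀ (a : A) (s' : S),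
      ((traj P π (H - (h + 1)) (h + 1) s').map fun l => (s, a) :: l).support.Finite :=
    fun a s' => ((traj_support_finite P π (H - (h + 1)) (h + 1) s').image _).subset
      (by rw [PMF.support_map])
  have houter : ∀ a : A,
      ((P ⟨h, hlt⟩ s a).bind fun s' =>
        (traj P π (H - (h + 1)) (h + 1) s').map fun l => (s, a) :: l).support.Finite := by
    intro a
    rw [PMF.support_bind]
    exact Set.Finite.biUnion (Set.toFinite _) fun s' _ => hmapfin a s'
  rw [pexp_bind _ _ _ (Set.toFinite _) houter]
  refine pexp_congr _ fun a => ?_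
  rw [pexp_bind _ _ _ (Set.toFinite _) (hmapfin a)]
  have h1 : ∀ s' : S,
      pexp ((traj P π (H - (h + 1)) (h + 1) s').map fun l => (s, a) :: l) (cumReward r h)
        = r ⟨h, hlt⟩ s a + value P r π (h + 1) s' := by
    intro s'
    rw [pexp_map _ _ _ (traj_support_finite P π _ _ _)]
    have h2 : pexp (traj P π (H - (h + 1)) (h + 1) s') (cumReward r h ∘ fun l => (s, a) :: l)
        = pexp (traj P π (H - (h + 1)) (h + 1) s')
            (fun l => r ⟨h, hlt⟩ s a + cumReward r (h + 1) l) :=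
      pexp_congr _ fun l => cumReward_cons r h hlt s a l
    rw [h2, pexp_const_add _ _ _ (traj_support_finite P π _ _ _)]
    rfl
  rw [pexp_congr _ h1, pexp_const_add _ _ _ (Set.toFinite _)]
  rfl


noncomputable def Vstar (P : Fin H → S → A → PMF S) (r : Fin H → S → A → ℝ)
    (h : ℕ) (s : S) : ℝ :=
  if hlt : h < H then
    ⨆ a : A, (r ⟨h, hlt⟩ s a + pexp (P ⟨h, hlt⟩ s a) fun s' => Vstar P r (h + 1) s')
  else 0
termination_by H - h
decreasing_by omega

noncomputable def Qf (P : Fin H → S → A → PMF S) (r : Fin H → S → A → ℝ)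
    (h : ℕ) (s : S) (a : A) : ℝ :=
  if hlt : h < H then
    r ⟨h, hlt⟩ s a + pexp (P ⟨h, hlt⟩ s a) fun s' => Vstar P r (h + 1) s'
  else 0

lemma Vstar_eq_sup {h : ℕ} (hlt : h < H) (s : S) :
    Vstar P r h s = ⨆ a : A, Qf P r h s a := by
  rw [Vstar, dif_pos hlt]
  exact congrArg _ (funext fun a => by rw [Qf, dif_pos hlt])

lemma Vstar_of_ge {h : ℕ} (hh : H ≤ h) (s : S) : Vstar P r h s = 0 := by
  rw [Vstar, dif_neg (by omega)]

noncomputable def dOpt (P : Fin H → S → A → PMF S) (r : Fin H → S → A → ℝ) :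
    Fin H → S → A :=
  fun h s => Classical.choose (Finite.exists_max (Qf P r h.1 s))

lemma Qf_le_dOpt (h : Fin H) (s : S) (a : A) :
    Qf P r h.1 s a ≤ Qf P r h.1 s (dOpt P r h s) :=
  Classical.choose_spec (Finite.exists_max (Qf P r h.1 s)) a

lemma Vstar_eq_Qf_dOpt {h : ℕ} (hlt : h < H) (s : S) :
    Vstar P r h s = Qf P r h s (dOpt P r ⟨h, hlt⟩ s) := by
  rw [Vstar_eq_sup P r hlt s]
  refine le_antisymm (ciSup_le fun a => Qf_le_dOpt P r ⟨h, hlt⟩ s a) ?_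
  exact le_ciSup (Set.Finite.bddAbove (Set.finite_range _)) _

lemma Qf_le_Vstar {h : ℕ} (hlt : h < H) (s : S) (a : A) :
    Qf P r h s a ≤ Vstar P r h s := by
  rw [Vstar_eq_Qf_dOpt P r hlt s]
  exact Qf_le_dOpt P r ⟨h, hlt⟩ s a

lemma value_le_Vstar : ∀ n h, h + n = H → ∀ (π : Fin H → S → PMF A) (s : S),
    value P r π h s ≤ Vstar P r h s := by
  intro n
  induction n with
  | zero =>
    intro h hh π s
    rw [value_of_ge P r π h (by omega), Vstar_of_ge P r (by omega)]
  | succ n ih =>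
    intro h hh π s
    have hlt : h < H := by omega
    rw [value_succ P r π h hlt s]
    refine pexp_le_const _ (Set.toFinite _) fun a => ?_
    have h2 : pexp (P ⟨h, hlt⟩ s a) (fun s' => value P r π (h + 1) s')
        ≤ pexp (P ⟨h, hlt⟩ s a) (fun s' => Vstar P r (h + 1) s') :=
      pexp_mono _ (Set.toFinite _) fun s' => ih (h + 1) (by omega) π s'
    have h3 : r ⟨h, hlt⟩ s a + pexp (P ⟨h, hlt⟩ s a) (fun s' => value P r π (h + 1) s')
        ≤ Qf P r h s a := by
      rw [Qf, dif_pos hlt]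
      linarith
    exact h3.trans (Qf_le_Vstar P r hlt s a)

lemma value_dOpt_eq_Vstar : ∀ n h, h + n = H → ∀ s : S,
    value P r (detPolicy (dOpt P r)) h s = Vstar P r h s := by
  intro n
  induction n with
  | zero =>
    intro h hh s
    rw [value_of_ge P r _ h (by omega), Vstar_of_ge P r (by omega)]
  | succ n ih =>
    intro h hh s
    have hlt : h < H := by omega
    rw [value_succ P r _ h hlt s]
    show pexp (PMF.pure (dOpt P r ⟨h, hlt⟩ s)) _ = _
    rw [pexp_pure]
    have h2 : (fun s' => value P r (detPolicy (dOpt P r)) (h + 1) s')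
        = fun s' => Vstar P r (h + 1) s' :=
      funext fun s' => ih (h + 1) (by omega) s'
    rw [h2, Vstar_eq_Qf_dOpt P r hlt s, Qf, dif_pos hlt]

end MDP

/-- Existence of a deterministic policy that is simultaneously optimal at
every stage and state; in particular the optimal value
`V*_h(s) = ⨆_π V^π_h(s)` is attained by a deterministic policy. -/
theorem exists_deterministic_optimal_policy {S A : Type} [Fintype S]
    [Nonempty S] [Fintype A] [Nonempty A] {H : ℕ}
    (P : Fin H → S → A → PMF S) (r : Fin H → S → A → ℝ) :
    ∃ d : Fin H → S → A,
      (∀ (π : Fin H → S → PMF A) (h : ℕ), h ≤ H → ∀ s : S,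
        value P r (detPolicy d) h s ≥ value P r π h s) ∧
      (∀ h : ℕ, h ≤ H → ∀ s : S,
        value P r (detPolicy d) h s =
          ⨆ π : Fin H → S → PMF A, value P r π h s) := by
  refine ⟨dOpt P r, ?_, ?_⟩
  · intro π h hh s
    have h1 := value_le_Vstar P r (H - h) h (by omega) π s
    have h2 := value_dOpt_eq_Vstar P r (H - h) h (by omega) s
    rw [ge_iff_le, h2]
    exact h1
  · intro h hh s
    have hbdd : BddAbove (Set.range fun π : Fin H → S → PMF A => value P r π h s) := by
      refine ⟨Vstar P r h s, ?_⟩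
      rintro x ⟨π, rfl⟩
      exact value_le_Vstar P r (H - h) h (by omega) π s
    refine le_antisymm (le_ciSup hbdd (detPolicy (dOpt P r))) (ciSup_le fun π => ?_)
    rw [value_dOpt_eq_Vstar P r (H - h) h (by omega) s]
    exact value_le_Vstar P r (H - h) h (by omega) π s
end
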